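/- Suppose |r(s,a,z₁) − r(s,a,z₂)| ≤ C₁·‖z₁ − z₂‖₁ and Σ_{s'} |P(s'|s,a,z₁) − P(s'|s,a,z₂)| ≤ C₂·‖z₁ − z₂‖₁ for all (s,a), rewards satisfy 0 ≤ r ≤ 1, and Q*_{z_i} is the fixed point of F_{z_i}(Q)(s,a) = r(s,a,z_i) + γ Σ_{s'} P(s'|s,a,z_i) max_b Q(s',b) with 0 < γ < 1 and ‖Q*_{z_i}‖_∞ ≤ 1/(1−γ). Then ‖Q*_{z₁} − Q*_{z₂}‖_∞ ≤ D·‖z₁ − z₂‖₁ where D = C₁/(1−γ) + γC₂/(1−γ)². -/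

import Mathlib

/-! The optimal Q-function is the fixed point of a γ-contraction in the sup norm, so perturbing the
Bellman operator by δ moves its fixed point by at most δ / (1 - γ). Changing the population
distribution from z₂ to z₁ perturbs the reward by C₁‖z₁ - z₂‖₁ and the expected next-state value by
at most C₂‖z₁ - z₂‖₁ · ‖Q*‖_∞ ≤ C₂‖z₁ - z₂‖₁ / (1 - γ). -/

open Finset Function

theorem abs_sup'_sub_sup'_le {ι α : Type*} [AddCommGroup α] [LinearOrder α] [IsOrderedAddMonoid α]
    {s : Finset ι} (hs : s.Nonempty) {f g : ι → α} {c : α} (h : ∀ i ∈ s, |f i - g i| ≤ c) :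
    |s.sup' hs f - s.sup' hs g| ≤ c := by
  rw [abs_sub_le_iff, sub_le_iff_le_add, sub_le_iff_le_add]
  constructor <;> refine sup'_le _ _ fun i hi => ?_
  · exact (sub_le_iff_le_add.1 (abs_sub_le_iff.1 (h i hi)).1).trans (by gcongr; exact le_sup' g hi)
  · exact (sub_le_iff_le_add.1 (abs_sub_le_iff.1 (h i hi)).2).trans (by gcongr; exact le_sup' f hi)

theorem abs_sup'_le {ι α : Type*} [AddCommGroup α] [LinearOrder α] [IsOrderedAddMonoid α]
    {s : Finset ι} (hs : s.Nonempty) {f : ι → α} {c : α} (h : ∀ i ∈ s, |f i| ≤ c) :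
    |s.sup' hs f| ≤ c := by
  simpa [sup'_const] using abs_sup'_sub_sup'_le hs (g := fun _ => (0 : α)) (by simpa using h)

theorem abs_sum_mul_sub_sum_mul_le {ι : Type*} [Fintype ι] {p q f g : ι → ℝ} {B Δ : ℝ}
    (hq0 : ∀ i, 0 ≤ q i) (hq1 : ∑ i, q i = 1) (hf : ∀ i, |f i| ≤ B)
    (hfg : ∀ i, |f i - g i| ≤ Δ) :
    |∑ i, p i * f i - ∑ i, q i * g i| ≤ (∑ i, |p i - q i|) * B + Δ :=
  calc |∑ i, p i * f i - ∑ i, q i * g i|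
      = |∑ i, ((p i - q i) * f i + q i * (f i - g i))| := by
        rw [← sum_sub_distrib]; congr 1; exact sum_congr rfl fun i _ => by ring
    _ ≤ ∑ i, (|p i - q i| * B + q i * Δ) := by
        refine (abs_sum_le_sum_abs _ _).trans (sum_le_sum fun i _ => (abs_add_le _ _).trans ?_)
        rw [abs_mul, abs_mul, abs_of_nonneg (hq0 i)]
        exact add_le_add (mul_le_mul_of_nonneg_left (hf i) (abs_nonneg _))
          (mul_le_mul_of_nonneg_left (hfg i) (hq0 i))
    _ = (∑ i, |p i - q i|) * B + Δ := by rw [sum_add_distrib, ← sum_mul, ← sum_mul, hq1, one_mul]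

section Bellman

variable {S A : Type*} [Fintype A] [Nonempty A]

noncomputable def stateValue (Q : S × A → ℝ) (s : S) : ℝ :=
  univ.sup' univ_nonempty fun b => Q (s, b)

theorem abs_stateValue_le {Q : S × A → ℝ} {B : ℝ} (hQ : ∀ sa, |Q sa| ≤ B) (s : S) :
    |stateValue Q s| ≤ B :=
  abs_sup'_le _ fun b _ => hQ (s, b)

theorem abs_stateValue_sub_stateValue_le {Q₁ Q₂ : S × A → ℝ} {Δ : ℝ}
    (hQ : ∀ sa, |Q₁ sa - Q₂ sa| ≤ Δ) (s : S) :
    |stateValue Q₁ s - stateValue Q₂ s| ≤ Δ :=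
  abs_sup'_sub_sup'_le _ fun b _ => hQ (s, b)

variable [Fintype S]

noncomputable def bellman (r : S × A → ℝ) (P : S × A → S → ℝ) (γ : ℝ) (Q : S × A → ℝ) :
    S × A → ℝ :=
  fun sa => r sa + γ * ∑ s', P sa s' * stateValue Q s'

theorem abs_bellman_sub_bellman_le {r₁ r₂ : S × A → ℝ} {P₁ P₂ : S × A → S → ℝ} {γ B Δ : ℝ}
    {Q₁ Q₂ : S × A → ℝ} (sa : S × A) (hγ : 0 ≤ γ) (hP0 : ∀ s', 0 ≤ P₂ sa s')
    (hP1 : ∑ s', P₂ sa s' = 1) (hQ₁ : ∀ sa, |Q₁ sa| ≤ B) (hQ : ∀ sa, |Q₁ sa - Q₂ sa| ≤ Δ) :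
    |bellman r₁ P₁ γ Q₁ sa - bellman r₂ P₂ γ Q₂ sa| ≤
      |r₁ sa - r₂ sa| + γ * ((∑ s', |P₁ sa s' - P₂ sa s'|) * B + Δ) :=
  calc |bellman r₁ P₁ γ Q₁ sa - bellman r₂ P₂ γ Q₂ sa|
      = |(r₁ sa - r₂ sa) + γ * (∑ s', P₁ sa s' * stateValue Q₁ s'
          - ∑ s', P₂ sa s' * stateValue Q₂ s')| := by
        unfold bellman; ring_nf
    _ ≤ |r₁ sa - r₂ sa| + γ * ((∑ s', |P₁ sa s' - P₂ sa s'|) * B + Δ) := by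
        refine (abs_add_le _ _).trans ?_
        rw [abs_mul, abs_of_nonneg hγ]
        gcongr
        exact abs_sum_mul_sub_sum_mul_le hP0 hP1 (abs_stateValue_le hQ₁)
          (abs_stateValue_sub_stateValue_le hQ)

theorem abs_sub_le_of_isFixedPt_bellman {r₁ r₂ : S × A → ℝ} {P₁ P₂ : S × A → S → ℝ}
    {γ a b B : ℝ} {Q₁ Q₂ : S × A → ℝ} (hγ0 : 0 ≤ γ) (hγ1 : γ < 1)
    (hP0 : ∀ sa s', 0 ≤ P₂ sa s') (hP1 : ∀ sa, ∑ s', P₂ sa s' = 1)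
    (hr : ∀ sa, |r₁ sa - r₂ sa| ≤ a) (hP : ∀ sa, ∑ s', |P₁ sa s' - P₂ sa s'| ≤ b)
    (hfix₁ : IsFixedPt (bellman r₁ P₁ γ) Q₁) (hfix₂ : IsFixedPt (bellman r₂ P₂ γ) Q₂)
    (hQ₁ : ∀ sa, |Q₁ sa| ≤ B) (sa : S × A) :
    |Q₁ sa - Q₂ sa| ≤ (a + γ * (b * B)) / (1 - γ) := by
  have : Nonempty (S × A) := ⟨sa⟩
  obtain ⟨sa₀, hmax⟩ := Finite.exists_max fun sa => |Q₁ sa - Q₂ sa|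
  have hB : 0 ≤ B := (abs_nonneg _).trans (hQ₁ sa)
  have hstep := abs_bellman_sub_bellman_le (r₁ := r₁) (r₂ := r₂) (P₁ := P₁) sa₀ hγ0 (hP0 sa₀)
    (hP1 sa₀) hQ₁ hmax
  rw [hfix₁.eq, hfix₂.eq] at hstep
  have hsa₀ : |Q₁ sa₀ - Q₂ sa₀| ≤ a + γ * (b * B + |Q₁ sa₀ - Q₂ sa₀|) :=
    hstep.trans (by gcongr; exacts [hr sa₀, hP sa₀])
  rw [le_div_iff₀ (by linarith)]
  nlinarith [hmax sa]

end Bellman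

theorem stmt_3_general {S A : Type*} [Fintype S] [Fintype A] [Nonempty A]
    (r : (S → ℝ) → S × A → ℝ) (P : (S → ℝ) → S × A → S → ℝ)
    (γ C₁ C₂ : ℝ) (hγ0 : 0 < γ) (hγ1 : γ < 1)
    (z₁ z₂ : S → ℝ)
    (hP0 : ∀ z sa s', 0 ≤ P z sa s') (hP1 : ∀ z sa, ∑ s', P z sa s' = 1)
    (hrLip : ∀ sa, |r z₁ sa - r z₂ sa| ≤ C₁ * ∑ s, |z₁ s - z₂ s|)
    (hPLip : ∀ sa, (∑ s', |P z₁ sa s' - P z₂ sa s'|) ≤ C₂ * ∑ s, |z₁ s - z₂ s|)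
    (Q₁ Q₂ : S × A → ℝ)
    (hfix₁ : ∀ sa, Q₁ sa =
      r z₁ sa + γ * ∑ s', P z₁ sa s' *
        Finset.univ.sup' Finset.univ_nonempty (fun b => Q₁ (s', b)))
    (hfix₂ : ∀ sa, Q₂ sa =
      r z₂ sa + γ * ∑ s', P z₂ sa s' *
        Finset.univ.sup' Finset.univ_nonempty (fun b => Q₂ (s', b)))
    (hbd₁ : ∀ sa, |Q₁ sa| ≤ 1 / (1 - γ)) :
    ∀ sa, |Q₁ sa - Q₂ sa| ≤
      (C₁ / (1 - γ) + γ * C₂ / (1 - γ) ^ 2) * ∑ s, |z₁ s - z₂ s| := by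
  intro sa
  have h := abs_sub_le_of_isFixedPt_bellman hγ0.le hγ1 (hP0 z₂) (hP1 z₂) hrLip hPLip
    (funext fun sa => (hfix₁ sa).symm) (funext fun sa => (hfix₂ sa).symm) hbd₁ sa
  have h1γ : 1 - γ ≠ 0 := by linarith
  convert h using 1
  field_simp

theorem stmt_3 {S A : Type*} [Fintype S] [Fintype A] [Nonempty S] [Nonempty A]
    (r : (S → ℝ) → S × A → ℝ) (P : (S → ℝ) → S × A → S → ℝ)
    (γ C₁ C₂ : ℝ) (hγ0 : 0 < γ) (hγ1 : γ < 1)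
    (z₁ z₂ : S → ℝ)
    (hz₁ : (∀ s, 0 ≤ z₁ s) ∧ ∑ s, z₁ s = 1) (hz₂ : (∀ s, 0 ≤ z₂ s) ∧ ∑ s, z₂ s = 1)
    (hr01 : ∀ z sa, 0 ≤ r z sa ∧ r z sa ≤ 1)
    (hP0 : ∀ z sa s', 0 ≤ P z sa s') (hP1 : ∀ z sa, ∑ s', P z sa s' = 1)
    (hrLip : ∀ sa, |r z₁ sa - r z₂ sa| ≤ C₁ * ∑ s, |z₁ s - z₂ s|)
    (hPLip : ∀ sa, (∑ s', |P z₁ sa s' - P z₂ sa s'|) ≤ C₂ * ∑ s, |z₁ s - z₂ s|)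
    (Q₁ Q₂ : S × A → ℝ)
    (hfix₁ : ∀ sa, Q₁ sa =
      r z₁ sa + γ * ∑ s', P z₁ sa s' *
        Finset.univ.sup' Finset.univ_nonempty (fun b => Q₁ (s', b)))
    (hfix₂ : ∀ sa, Q₂ sa =
      r z₂ sa + γ * ∑ s', P z₂ sa s' *
        Finset.univ.sup' Finset.univ_nonempty (fun b => Q₂ (s', b)))
    (hbd₁ : ∀ sa, |Q₁ sa| ≤ 1 / (1 - γ)) (hbd₂ : ∀ sa, |Q₂ sa| ≤ 1 / (1 - γ)) :
    ∀ sa, |Q₁ sa - Q₂ sa| ≤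
      (C₁ / (1 - γ) + γ * C₂ / (1 - γ) ^ 2) * ∑ s, |z₁ s - z₂ s| :=
  stmt_3_general r P γ C₁ C₂ hγ0 hγ1 z₁ z₂ hP0 hP1 hrLip hPLip Q₁ Q₂ hfix₁ hfix₂ hbd₁
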